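/- Resistive Ohm's law in visco-resistive Hall MHD from the generalized Lagrange–d'Alembert principle (Theorem 4.1, electron equation). Let Ω ⊆ ℝ³ be open, T > 0, q, η ∈ ℝ. Let u_i, u_e, A : (0,T) × Ω → ℝ³ and n : (0,T) × Ω → ℝ be smooth, and assume ∂_t n + div(n u_i) = 0 and div(n u_i) = div(n u_e) on (0,T) × Ω. Assume that for every smooth vector field v : (0,T) × Ω → ℝ³ with compact support in (0,T) × Ω one has ∫∫ [ η (q n)² (u_i − u_e)·v − q n A·(∂_t v + [u_e,v]) ] dx dt = 0. Then on (0,T) × Ω: q n ( η J − E − u_e × B ) = 0, where E := −∂_t A − ∇(A·u_e), B := ∇×A and J := q n (u_i − u_e); in particular E + u_e × B = η J wherever q n ≠ 0. -/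

import Mathlib

open MeasureTheory

noncomputable section

abbrev V3 := Fin 3 → ℝ

/-- Partial derivative in the `i`-th spatial direction. -/
def pd (i : Fin 3) (f : V3 → ℝ) (x : V3) : ℝ := fderiv ℝ f x (Pi.single i 1)

/-- Gradient of a scalar field on `ℝ³`. -/
def grad3 (f : V3 → ℝ) (x : V3) : V3 := fun i => pd i f x

/-- Divergence of a vector field on `ℝ³`. -/
def div3 (w : V3 → V3) (x : V3) : ℝ := ∑ i, pd i (fun y => w y i) x

/-- Curl of a vector field on `ℝ³`. -/
def curl3 (A : V3 → V3) (x : V3) : V3 :=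
  ![pd 1 (fun y => A y 2) x - pd 2 (fun y => A y 1) x,
    pd 2 (fun y => A y 0) x - pd 0 (fun y => A y 2) x,
    pd 0 (fun y => A y 1) x - pd 1 (fun y => A y 0) x]

/-- Jacobian of a vector field applied to a vector: `(v·∇)A` when `v` is the direction. -/
def jac (A : V3 → V3) (x v : V3) : V3 := fun i => fderiv ℝ (fun y => A y i) x v

/-- Transpose of the Jacobian of `u` applied to a vector `a`. -/
def jacT (u : V3 → V3) (x a : V3) : V3 := fun j => ∑ i, pd j (fun y => u y i) x * a i

/-- Euclidean dot product on `ℝ³`. -/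
def dot3 (a b : V3) : ℝ := ∑ i, a i * b i

/-- Lie bracket of vector fields `[u,v] = (u·∇)v − (v·∇)u`. -/
def lie3 (u v : V3 → V3) (x : V3) : V3 := jac v x (u x) - jac u x (v x)

/-- Partial time derivative of a time-dependent field. -/
def dt {E : Type*} [NormedAddCommGroup E] [NormedSpace ℝ E]
    (f : ℝ × V3 → E) (p : ℝ × V3) : E := deriv (fun τ => f (τ, p.2)) p.1

/-- Partial derivative of `e = e(n,s)` in its first argument. -/
def e1 (e : ℝ × ℝ → ℝ) (a b : ℝ) : ℝ := fderiv ℝ e (a, b) (1, 0)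

/-- Partial derivative of `e = e(n,s)` in its second argument. -/
def e2 (e : ℝ × ℝ → ℝ) (a b : ℝ) : ℝ := fderiv ℝ e (a, b) (0, 1)


instance : (volume : Measure (ℝ × V3)).IsAddHaarMeasure :=
  MeasureTheory.Measure.prod.instIsAddHaarMeasure _ _

theorem fderiv_slice_x (f : ℝ × V3 → ℝ) {t : ℝ} {x : V3} (hf : DifferentiableAt ℝ f (t,x)) (w : V3) :
    fderiv ℝ (fun y => f (t,y)) x w = fderiv ℝ f (t,x) (0, w) := by
  have hg : HasFDerivAt (fun y : V3 => ((t,y) : ℝ × V3))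
      ((0 : V3 →L[ℝ] ℝ).prod (ContinuousLinearMap.id ℝ V3)) x :=
    HasFDerivAt.prodMk (hasFDerivAt_const t x) (hasFDerivAt_id x)
  have h2 := (hf.hasFDerivAt.comp x hg).fderiv
  have h3 : (fun y => f (t,y)) = f ∘ (fun y : V3 => ((t,y) : ℝ × V3)) := rfl
  rw [h3, h2]; simp

theorem pd_slice (f : ℝ × V3 → ℝ) {t : ℝ} {x : V3} (hf : DifferentiableAt ℝ f (t,x)) (j : Fin 3) :
    pd j (fun y => f (t,y)) x = fderiv ℝ f (t,x) (0, Pi.single j 1) :=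
  fderiv_slice_x f hf _

theorem dt_eq {E : Type*} [NormedAddCommGroup E] [NormedSpace ℝ E] (f : ℝ × V3 → E) {p : ℝ × V3}
    (hf : DifferentiableAt ℝ f p) : dt f p = fderiv ℝ f p (1, 0) := by
  have hg : HasDerivAt (fun τ : ℝ => ((τ, p.2) : ℝ × V3)) (1, (0:V3)) p.1 :=
    HasDerivAt.prodMk (hasDerivAt_id p.1) (hasDerivAt_const p.1 p.2)
  have hf' : HasFDerivAt f (fderiv ℝ f p) ((fun τ : ℝ => ((τ, p.2) : ℝ × V3)) p.1) := by
    simpa using hf.hasFDerivAt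
  exact (hf'.comp_hasDerivAt p.1 hg).deriv

theorem fderiv_pi_apply (f : ℝ × V3 → V3) {p : ℝ × V3} (hf : DifferentiableAt ℝ f p)
    (w : ℝ × V3) (i : Fin 3) :
    fderiv ℝ (fun r => f r i) p w = fderiv ℝ f p w i := by
  have h3 : (fun r => f r i) = (ContinuousLinearMap.proj (R := ℝ) (φ := fun _ : Fin 3 => ℝ) i) ∘ f := rfl
  rw [h3, ((ContinuousLinearMap.proj (R := ℝ) (φ := fun _ : Fin 3 => ℝ) i).hasFDerivAt.comp p hf.hasFDerivAt).fderiv]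
  simp

theorem fderiv_mul_apply {f g : ℝ × V3 → ℝ} {p : ℝ × V3} (hf : DifferentiableAt ℝ f p)
    (hg : DifferentiableAt ℝ g p) (w : ℝ × V3) :
    fderiv ℝ (fun r => f r * g r) p w = fderiv ℝ f p w * g p + f p * fderiv ℝ g p w := by
  rw [fderiv_fun_mul hf hg]; simp; ring

theorem fderiv_const_mul_apply {g : ℝ × V3 → ℝ} {p : ℝ × V3} (c : ℝ)
    (hg : DifferentiableAt ℝ g p) (w : ℝ × V3) :
    fderiv ℝ (fun r => c * g r) p w = c * fderiv ℝ g p w := by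
  rw [fderiv_const_mul hg c]; simp

theorem fderiv_dir_expand (f : ℝ × V3 → ℝ) (p : ℝ × V3) (w : V3) :
    fderiv ℝ f p ((0:ℝ), w) = ∑ j, w j * fderiv ℝ f p ((0:ℝ), Pi.single j 1) := by
  have h : (((0:ℝ), w) : ℝ × V3) = ∑ j, w j • (((0:ℝ), (Pi.single j 1 : V3)) : ℝ × V3) := by
    refine Prod.ext ?_ ?_
    · simp [Prod.fst_sum]
    · simp only [Prod.snd_sum, Prod.smul_mk]
      funext k
      simp [Finset.sum_apply, Pi.single_apply]
  rw [h, map_sum]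
  refine Finset.sum_congr rfl fun j _ => ?_
  rw [_root_.map_smul]
  simp

theorem fderiv_sum3_apply (f : Fin 3 → (ℝ × V3 → ℝ)) {p : ℝ × V3}
    (hf : ∀ i, DifferentiableAt ℝ (f i) p) (w : ℝ × V3) :
    fderiv ℝ (fun r => ∑ i, f i r) p w = ∑ i, fderiv ℝ (f i) p w := by
  rw [fderiv_fun_sum (fun i _ => hf i)]
  simp


theorem key_ibp (h : ℝ × V3 → ℝ) (hh : ContDiff ℝ (⊤:ℕ∞) h) (hc : HasCompactSupport h)
    (w : ℝ × V3) : ∫ p : ℝ × V3, fderiv ℝ h p w = 0 := by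
  have h1 : ∫ p : ℝ × V3, (fun _ => (1:ℝ)) p * fderiv ℝ h p w
      = - ∫ p : ℝ × V3, fderiv ℝ (fun _ => (1:ℝ)) p w * h p := by
    apply integral_mul_fderiv_eq_neg_fderiv_mul_of_integrable
    · simp [fderiv_const]
    · simpa using ((hh.continuous_fderiv (by simp)).clm_apply
        continuous_const).integrable_of_hasCompactSupport (hc.fderiv_apply (𝕜 := ℝ) w)
    · simpa using hh.continuous.integrable_of_hasCompactSupport hc
    · exact fun x _ => differentiableAt_const _
    · exact fun x _ => hh.differentiable (by simp) x
  simpa [fderiv_const] using h1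

def EL (q η : ℝ) (ui ue A : ℝ × V3 → V3) (n : ℝ × V3 → ℝ) (p : ℝ × V3) : V3 := fun i =>
  η * (q * n p)^2 * (ui p i - ue p i)
  + fderiv ℝ (fun r => q * n r * A r i) p (1, (0:V3))
  + ∑ j, fderiv ℝ (fun r => q * n r * A r i * ue r j) p ((0:ℝ), Pi.single j 1)
  + q * n p * ∑ j, fderiv ℝ (fun r => ue r j) p ((0:ℝ), Pi.single i 1) * A p j


theorem integrand_identity (q η : ℝ) (ui ue A v : ℝ × V3 → V3) (n : ℝ × V3 → ℝ)
    (hue : ContDiff ℝ (⊤:ℕ∞) ue) (hA : ContDiff ℝ (⊤:ℕ∞) A) (hn : ContDiff ℝ (⊤:ℕ∞) n)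
    (hv : ContDiff ℝ (⊤:ℕ∞) v) (p : ℝ × V3) :
    dot3 (EL q η ui ue A n p) (v p)
      = (η * (q * n p) ^ 2 * dot3 (ui p - ue p) (v p)
          - q * n p * dot3 (A p) (dt v p + lie3 (fun y => ue (p.1, y)) (fun y => v (p.1, y)) p.2))
        + fderiv ℝ (fun r => q * n r * dot3 (A r) (v r)) p (1, (0:V3))
        + ∑ j, fderiv ℝ (fun r => q * n r * dot3 (A r) (v r) * ue r j) p ((0:ℝ), Pi.single j 1) := by
  obtain ⟨t, x⟩ := p
  have dn : Differentiable ℝ n := hn.differentiable (by simp)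
  have dA : ∀ i, Differentiable ℝ (fun r => A r i) := fun i =>
    (ContinuousLinearMap.proj (R := ℝ) (φ := fun _ : Fin 3 => ℝ) i).differentiable.comp
      (hA.differentiable (by simp))
  have due : ∀ i, Differentiable ℝ (fun r => ue r i) := fun i =>
    (ContinuousLinearMap.proj (R := ℝ) (φ := fun _ : Fin 3 => ℝ) i).differentiable.comp
      (hue.differentiable (by simp))
  have dv : ∀ i, Differentiable ℝ (fun r => v r i) := fun i =>
    (ContinuousLinearMap.proj (R := ℝ) (φ := fun _ : Fin 3 => ℝ) i).differentiable.comp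
      (hv.differentiable (by simp))
  have dvv : Differentiable ℝ v := hv.differentiable (by simp)
  have dsum : Differentiable ℝ (fun r => ∑ i, A r i * v r i) := by
    apply Differentiable.fun_sum
    intro i _
    exact (dA i).mul (dv i)
  have Edtv : ∀ i, dt v (t,x) i = fderiv ℝ (fun r => v r i) (t,x) (1, (0:V3)) := by
    intro i
    rw [dt_eq v (dvv _), fderiv_pi_apply v (dvv _)]
  have Eslice : ∀ (f : ℝ × V3 → ℝ), Differentiable ℝ f → ∀ w : V3,
      fderiv ℝ (fun y => f (t, y)) x w
        = ∑ j, w j * fderiv ℝ f (t,x) ((0:ℝ), Pi.single j 1) := by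
    intro f hf w
    rw [fderiv_slice_x f (hf _) w, fderiv_dir_expand]
  have Elie : ∀ i, lie3 (fun y => ue (t, y)) (fun y => v (t, y)) x i
      = ∑ j, ue (t,x) j * fderiv ℝ (fun r => v r i) (t,x) ((0:ℝ), Pi.single j 1)
        - ∑ j, v (t,x) j * fderiv ℝ (fun r => ue r i) (t,x) ((0:ℝ), Pi.single j 1) := by
    intro i
    simp only [lie3, Pi.sub_apply, jac]
    rw [Eslice (fun r => v r i) (dv i) _, Eslice (fun r => ue r i) (due i) _]
  have Eqn : ∀ (g : ℝ × V3 → ℝ), Differentiable ℝ g → ∀ (w : ℝ × V3),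
      fderiv ℝ (fun r => q * n r * g r) (t,x) w
        = q * fderiv ℝ n (t,x) w * g (t,x) + q * n (t,x) * fderiv ℝ g (t,x) w := by
    intro g hg w
    rw [fderiv_mul_apply (f := fun r => q * n r) (g := g) ((dn.const_mul q) _) (hg _),
      fderiv_const_mul_apply q (dn _)]
  have E1 : ∀ i, fderiv ℝ (fun r => q * n r * A r i) (t,x) (1,(0:V3))
      = q * fderiv ℝ n (t,x) (1,(0:V3)) * A (t,x) i
        + q * n (t,x) * fderiv ℝ (fun r => A r i) (t,x) (1,(0:V3)) :=
    fun i => Eqn _ (dA i) _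
  have E2 : ∀ i j, fderiv ℝ (fun r => q * n r * A r i * ue r j) (t,x) ((0:ℝ), Pi.single j 1)
      = (q * fderiv ℝ n (t,x) ((0:ℝ), Pi.single j 1) * A (t,x) i
          + q * n (t,x) * fderiv ℝ (fun r => A r i) (t,x) ((0:ℝ), Pi.single j 1)) * ue (t,x) j
        + (q * n (t,x) * A (t,x) i) * fderiv ℝ (fun r => ue r j) (t,x) ((0:ℝ), Pi.single j 1) := by
    intro i j
    rw [fderiv_mul_apply (f := fun r => q * n r * A r i) (g := fun r => ue r j)
      (((dn.const_mul q).mul (dA i)) _) ((due j) _), Eqn _ (dA i)]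
  have Edot : ∀ (w : ℝ × V3), fderiv ℝ (fun r => ∑ i, A r i * v r i) (t,x) w
      = ∑ i, (fderiv ℝ (fun r => A r i) (t,x) w * v (t,x) i
          + A (t,x) i * fderiv ℝ (fun r => v r i) (t,x) w) := by
    intro w
    rw [fderiv_sum3_apply (fun i => fun r => A r i * v r i) (fun i => ((dA i).mul (dv i)) _) w]
    exact Finset.sum_congr rfl fun i _ => fderiv_mul_apply ((dA i) _) ((dv i) _) w
  have Epsi : ∀ (w : ℝ × V3), fderiv ℝ (fun r => q * n r * ∑ i, A r i * v r i) (t,x) w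
      = q * fderiv ℝ n (t,x) w * (∑ i, A (t,x) i * v (t,x) i)
        + q * n (t,x) * ∑ i, (fderiv ℝ (fun r => A r i) (t,x) w * v (t,x) i
            + A (t,x) i * fderiv ℝ (fun r => v r i) (t,x) w) := by
    intro w
    rw [Eqn _ dsum w, Edot w]
  have Epsij : ∀ j, fderiv ℝ (fun r => q * n r * (∑ i, A r i * v r i) * ue r j) (t,x)
        ((0:ℝ), Pi.single j 1)
      = (q * fderiv ℝ n (t,x) ((0:ℝ), Pi.single j 1) * (∑ i, A (t,x) i * v (t,x) i)
          + q * n (t,x) * ∑ i, (fderiv ℝ (fun r => A r i) (t,x) ((0:ℝ), Pi.single j 1) * v (t,x) i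
              + A (t,x) i * fderiv ℝ (fun r => v r i) (t,x) ((0:ℝ), Pi.single j 1))) * ue (t,x) j
        + (q * n (t,x) * ∑ i, A (t,x) i * v (t,x) i)
            * fderiv ℝ (fun r => ue r j) (t,x) ((0:ℝ), Pi.single j 1) := by
    intro j
    rw [fderiv_mul_apply (f := fun r => q * n r * ∑ i, A r i * v r i) (g := fun r => ue r j)
      (((dn.const_mul q).mul dsum) _) ((due j) _), Epsi]
  simp only [dot3, EL, Pi.add_apply, Pi.sub_apply]
  simp only [Edtv, Elie, E1, E2, Epsi, Epsij]
  simp only [Fin.sum_univ_three]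
  ring


theorem EL_to_ohm (q η : ℝ) (ui ue A : ℝ × V3 → V3) (n : ℝ × V3 → ℝ)
    (hui : ContDiff ℝ (⊤:ℕ∞) ui) (hue : ContDiff ℝ (⊤:ℕ∞) ue)
    (hA : ContDiff ℝ (⊤:ℕ∞) A) (hn : ContDiff ℝ (⊤:ℕ∞) n) (p : ℝ × V3)
    (hEL : EL q η ui ue A n p = 0)
    (hadv : dt n p + div3 (fun y => n (p.1, y) • ui (p.1, y)) p.2 = 0)
    (hdiv : div3 (fun y => n (p.1, y) • ui (p.1, y)) p.2
      = div3 (fun y => n (p.1, y) • ue (p.1, y)) p.2) :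
    (q * n p) • (η • ((q * n p) • (ui p - ue p))
      - (-dt A p - grad3 (fun y => dot3 (A (p.1, y)) (ue (p.1, y))) p.2)
      - crossProduct (ue p) (curl3 (fun y => A (p.1, y)) p.2)) = 0 := by
  obtain ⟨t, x⟩ := p
  have dn : Differentiable ℝ n := hn.differentiable (by simp)
  have dA : ∀ i, Differentiable ℝ (fun r => A r i) := fun i =>
    (ContinuousLinearMap.proj (R := ℝ) (φ := fun _ : Fin 3 => ℝ) i).differentiable.comp
      (hA.differentiable (by simp))
  have due : ∀ i, Differentiable ℝ (fun r => ue r i) := fun i =>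
    (ContinuousLinearMap.proj (R := ℝ) (φ := fun _ : Fin 3 => ℝ) i).differentiable.comp
      (hue.differentiable (by simp))
  have dui : ∀ i, Differentiable ℝ (fun r => ui r i) := fun i =>
    (ContinuousLinearMap.proj (R := ℝ) (φ := fun _ : Fin 3 => ℝ) i).differentiable.comp
      (hui.differentiable (by simp))
  have dAA : Differentiable ℝ A := hA.differentiable (by simp)
  -- continuity equation in global form
  have Ediv : ∀ (u : ℝ × V3 → V3), (∀ i, Differentiable ℝ (fun r => u r i)) →
      div3 (fun y => n (t, y) • u (t, y)) x
        = ∑ j, (fderiv ℝ n (t,x) ((0:ℝ), Pi.single j 1) * u (t,x) j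
            + n (t,x) * fderiv ℝ (fun r => u r j) (t,x) ((0:ℝ), Pi.single j 1)) := by
    intro u du
    simp only [div3, Pi.smul_apply, smul_eq_mul]
    refine Finset.sum_congr rfl fun j _ => ?_
    rw [pd_slice (fun r => n r * u r j) ((dn.mul (du j)) _) j,
      fderiv_mul_apply (dn _) ((du j) _)]
  have hadvC : fderiv ℝ n (t,x) (1,(0:V3))
      + ∑ j, (fderiv ℝ n (t,x) ((0:ℝ), Pi.single j 1) * ue (t,x) j
          + n (t,x) * fderiv ℝ (fun r => ue r j) (t,x) ((0:ℝ), Pi.single j 1)) = 0 := by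
    have h1 := hadv
    rw [dt_eq n (dn _)] at h1
    rw [Ediv ui dui, Ediv ue due] at hdiv
    rw [Ediv ui dui] at h1
    rw [← hdiv]
    exact h1
  -- EL components expanded
  have Eqn : ∀ (g : ℝ × V3 → ℝ), Differentiable ℝ g → ∀ (w : ℝ × V3),
      fderiv ℝ (fun r => q * n r * g r) (t,x) w
        = q * fderiv ℝ n (t,x) w * g (t,x) + q * n (t,x) * fderiv ℝ g (t,x) w := by
    intro g hg w
    rw [fderiv_mul_apply (f := fun r => q * n r) (g := g) ((dn.const_mul q) _) (hg _),
      fderiv_const_mul_apply q (dn _)]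
  have hELc : ∀ i, η * (q * n (t,x))^2 * (ui (t,x) i - ue (t,x) i)
      + (q * fderiv ℝ n (t,x) (1,(0:V3)) * A (t,x) i
          + q * n (t,x) * fderiv ℝ (fun r => A r i) (t,x) (1,(0:V3)))
      + ∑ j, ((q * fderiv ℝ n (t,x) ((0:ℝ), Pi.single j 1) * A (t,x) i
          + q * n (t,x) * fderiv ℝ (fun r => A r i) (t,x) ((0:ℝ), Pi.single j 1)) * ue (t,x) j
        + (q * n (t,x) * A (t,x) i) * fderiv ℝ (fun r => ue r j) (t,x) ((0:ℝ), Pi.single j 1))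
      + q * n (t,x) * ∑ j, fderiv ℝ (fun r => ue r j) (t,x) ((0:ℝ), Pi.single i 1) * A (t,x) j
      = 0 := by
    intro i
    have h := congrFun hEL i
    simp only [EL, Pi.zero_apply] at h
    rw [Eqn _ (dA i)] at h
    have hsum : ∀ j, fderiv ℝ (fun r => q * n r * A r i * ue r j) (t,x) ((0:ℝ), Pi.single j 1)
        = (q * fderiv ℝ n (t,x) ((0:ℝ), Pi.single j 1) * A (t,x) i
            + q * n (t,x) * fderiv ℝ (fun r => A r i) (t,x) ((0:ℝ), Pi.single j 1)) * ue (t,x) j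
          + (q * n (t,x) * A (t,x) i) * fderiv ℝ (fun r => ue r j) (t,x) ((0:ℝ), Pi.single j 1) := by
      intro j
      rw [fderiv_mul_apply (f := fun r => q * n r * A r i) (g := fun r => ue r j)
        (((dn.const_mul q).mul (dA i)) _) ((due j) _), Eqn _ (dA i)]
    simp only [hsum] at h
    exact h
  -- dt A components
  have hDtA : ∀ i, dt A (t,x) i = fderiv ℝ (fun r => A r i) (t,x) (1,(0:V3)) := by
    intro i
    rw [dt_eq A (dAA _), fderiv_pi_apply A (dAA _)]
  have hgrad : ∀ i, pd i (fun y => dot3 (A (t, y)) (ue (t, y))) x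
      = ∑ j, (fderiv ℝ (fun r => A r j) (t,x) ((0:ℝ), Pi.single i 1) * ue (t,x) j
          + A (t,x) j * fderiv ℝ (fun r => ue r j) (t,x) ((0:ℝ), Pi.single i 1)) := by
    intro i
    simp only [dot3]
    rw [pd_slice (fun r => ∑ j, A r j * ue r j)
      ((Differentiable.fun_sum (fun j _ => (dA j).mul (due j))) _) i,
      fderiv_sum3_apply (fun j => fun r => A r j * ue r j)
        (fun j => ((dA j).mul (due j)) _)]
    exact Finset.sum_congr rfl fun j _ => fderiv_mul_apply ((dA j) _) ((due j) _) _
  have hpdA : ∀ (a b : Fin 3), pd a (fun y => A (t, y) b) x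
      = fderiv ℝ (fun r => A r b) (t,x) ((0:ℝ), Pi.single a 1) :=
    fun a b => pd_slice (fun r => A r b) ((dA b) _) a
  have h0 := hELc 0
  have h1 := hELc 1
  have h2 := hELc 2
  simp only [Fin.sum_univ_three] at h0 h1 h2 hadvC
  funext i
  fin_cases i <;>
    simp only [Fin.zero_eta, Fin.mk_one, Fin.reduceFinMk, Fin.isValue, Pi.smul_apply, Pi.sub_apply, Pi.neg_apply, Pi.zero_apply, smul_eq_mul,
      grad3, curl3, cross_apply, Matrix.cons_val_zero, Matrix.cons_val_one, Matrix.head_cons,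
      Matrix.cons_val_two, Matrix.tail_cons, hDtA, hgrad, hpdA, Fin.sum_univ_three,
      Fin.isValue]
  · linear_combination h0 - q * A (t, x) 0 * hadvC
  · linear_combination h1 - q * A (t, x) 1 * hadvC
  · linear_combination h2 - q * A (t, x) 2 * hadvC

theorem var_to_EL (Ω : Set V3) (hΩ : IsOpen Ω) (T : ℝ) (q η : ℝ)
    (ui ue A : ℝ × V3 → V3) (n : ℝ × V3 → ℝ)
    (hui : ContDiff ℝ (⊤ : ℕ∞) ui) (hue : ContDiff ℝ (⊤ : ℕ∞) ue)
    (hA : ContDiff ℝ (⊤ : ℕ∞) A) (hn : ContDiff ℝ (⊤ : ℕ∞) n)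
    (hvar : ∀ v : ℝ × V3 → V3, ContDiff ℝ (⊤ : ℕ∞) v → HasCompactSupport v →
      tsupport v ⊆ Set.Ioo 0 T ×ˢ Ω →
      (∫ p in Set.Ioo 0 T ×ˢ Ω,
        (η * (q * n p) ^ 2 * dot3 (ui p - ue p) (v p)
          - q * n p * dot3 (A p)
              (dt v p + lie3 (fun y => ue (p.1, y)) (fun y => v (p.1, y)) p.2))) = 0) :
    ∀ p ∈ Set.Ioo 0 T ×ˢ Ω, EL q η ui ue A n p = 0 := by
  have hSopen : IsOpen (Set.Ioo (0:ℝ) T ×ˢ Ω) := (isOpen_Ioo).prod hΩ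
  have cfd : ∀ (f : ℝ × V3 → ℝ), ContDiff ℝ (⊤:ℕ∞) f → ∀ w : ℝ × V3,
      Continuous (fun p => fderiv ℝ f p w) :=
    fun f hf w => (hf.continuous_fderiv (by simp)).clm_apply continuous_const
  have sA : ∀ i, ContDiff ℝ (⊤:ℕ∞) (fun r => A r i) := fun i =>
    (ContinuousLinearMap.proj (R := ℝ) (φ := fun _ : Fin 3 => ℝ) i).contDiff.comp hA
  have sue : ∀ i, ContDiff ℝ (⊤:ℕ∞) (fun r => ue r i) := fun i =>
    (ContinuousLinearMap.proj (R := ℝ) (φ := fun _ : Fin 3 => ℝ) i).contDiff.comp hue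
  have sqnA : ∀ i, ContDiff ℝ (⊤:ℕ∞) (fun r => q * n r * A r i) := fun i =>
    (contDiff_const.mul hn).mul (sA i)
  have sqnAue : ∀ i j, ContDiff ℝ (⊤:ℕ∞) (fun r => q * n r * A r i * ue r j) := fun i j =>
    (sqnA i).mul (sue j)
  have hELconti : ∀ i, Continuous fun p => EL q η ui ue A n p i := by
    intro i
    simp only [EL]
    refine (((?_ : Continuous _).add ?_).add ?_).add ?_
    · exact (continuous_const.mul ((continuous_const.mul hn.continuous).pow 2)).mul
        (((continuous_apply i).comp hui.continuous).sub ((continuous_apply i).comp hue.continuous))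
    · exact cfd _ (sqnA i) _
    · exact continuous_finset_sum _ fun j _ => cfd _ (sqnAue i j) _
    · exact (continuous_const.mul hn.continuous).mul
        (continuous_finset_sum _ fun j _ => (cfd _ (sue j) _).mul
          ((continuous_apply j).comp hA.continuous))
  have hint : ∀ v : ℝ × V3 → V3, ContDiff ℝ (⊤ : ℕ∞) v → HasCompactSupport v →
      tsupport v ⊆ Set.Ioo 0 T ×ˢ Ω →
      (∫ p in Set.Ioo 0 T ×ˢ Ω, dot3 (EL q η ui ue A n p) (v p)) = 0 := by
    intro v hv hvc hvs
    have hid := integrand_identity q η ui ue A v n hue hA hn hv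
    have sv : ∀ i, ContDiff ℝ (⊤:ℕ∞) (fun r => v r i) := fun i =>
      (ContinuousLinearMap.proj (R := ℝ) (φ := fun _ : Fin 3 => ℝ) i).contDiff.comp hv
    have sdot : ContDiff ℝ (⊤:ℕ∞) (fun r => dot3 (A r) (v r)) := by
      simp only [dot3]
      exact ContDiff.sum fun i _ => (sA i).mul (sv i)
    have sψ : ContDiff ℝ (⊤:ℕ∞) (fun r => q * n r * dot3 (A r) (v r)) :=
      (contDiff_const.mul hn).mul sdot
    have cψ : HasCompactSupport (fun r => q * n r * dot3 (A r) (v r)) := by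
      refine hvc.mono ?_
      intro r hr
      simp only [Function.mem_support] at hr ⊢
      intro h0
      exact hr (by simp [h0, dot3])
    have sψj : ∀ j, ContDiff ℝ (⊤:ℕ∞) (fun r => q * n r * dot3 (A r) (v r) * ue r j) :=
      fun j => sψ.mul (sue j)
    have cψj : ∀ j, HasCompactSupport (fun r => q * n r * dot3 (A r) (v r) * ue r j) := by
      intro j
      refine hvc.mono ?_
      intro r hr
      simp only [Function.mem_support] at hr ⊢
      intro h0
      exact hr (by simp [h0, dot3])
    have tψv : tsupport (fun r => q * n r * dot3 (A r) (v r)) ⊆ Set.Ioo 0 T ×ˢ Ω := by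
      refine (closure_mono ?_).trans hvs
      · intro r hr
        simp only [Function.mem_support] at hr ⊢
        intro h0
        exact hr (by simp [h0, dot3])
    have tψjv : ∀ j, tsupport (fun r => q * n r * dot3 (A r) (v r) * ue r j)
        ⊆ Set.Ioo 0 T ×ˢ Ω := by
      intro j
      refine le_trans (closure_mono ?_) hvs
      intro r hr
      simp only [Function.mem_support] at hr ⊢
      intro h0
      exact hr (by simp [h0, dot3])
    -- integrable pieces
    have i1 : Integrable (fun p => dot3 (EL q η ui ue A n p) (v p)) := by
      have hcont : Continuous (fun p => dot3 (EL q η ui ue A n p) (v p)) := by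
        have : (fun p => dot3 (EL q η ui ue A n p) (v p))
            = fun p => ∑ i, EL q η ui ue A n p i * v p i := rfl
        rw [this]
        exact continuous_finset_sum _ fun i _ =>
          (hELconti i).mul ((continuous_apply i).comp hv.continuous)
      refine hcont.integrable_of_hasCompactSupport (hvc.mono ?_)
      intro r hr
      simp only [Function.mem_support] at hr ⊢
      intro h0
      exact hr (by simp [h0, dot3])
    have i2 : Integrable (fun p => fderiv ℝ (fun r => q * n r * dot3 (A r) (v r)) p
        (1, (0:V3))) :=
      (cfd _ sψ _).integrable_of_hasCompactSupport (cψ.fderiv_apply (𝕜 := ℝ) _)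
    have i3j : ∀ j, Integrable (fun p => fderiv ℝ
        (fun r => q * n r * dot3 (A r) (v r) * ue r j) p ((0:ℝ), Pi.single j 1)) :=
      fun j => (cfd _ (sψj j) _).integrable_of_hasCompactSupport
        ((cψj j).fderiv_apply (𝕜 := ℝ) _)
    have i3 : Integrable (fun p => ∑ j, fderiv ℝ
        (fun r => q * n r * dot3 (A r) (v r) * ue r j) p ((0:ℝ), Pi.single j 1)) :=
      integrable_finset_sum _ fun j _ => i3j j
    -- the variational integral equals our integral minus divergence terms
    have hsub : (∫ p in Set.Ioo 0 T ×ˢ Ω,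
        (dot3 (EL q η ui ue A n p) (v p)
          - fderiv ℝ (fun r => q * n r * dot3 (A r) (v r)) p (1, (0:V3))
          - ∑ j, fderiv ℝ (fun r => q * n r * dot3 (A r) (v r) * ue r j) p
              ((0:ℝ), Pi.single j 1)))
        = (∫ p in Set.Ioo 0 T ×ˢ Ω, dot3 (EL q η ui ue A n p) (v p))
          - (∫ p in Set.Ioo 0 T ×ˢ Ω,
              fderiv ℝ (fun r => q * n r * dot3 (A r) (v r)) p (1, (0:V3)))
          - (∫ p in Set.Ioo 0 T ×ˢ Ω, ∑ j, fderiv ℝ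
              (fun r => q * n r * dot3 (A r) (v r) * ue r j) p ((0:ℝ), Pi.single j 1)) := by
      have i12 : Integrable (fun p => dot3 (EL q η ui ue A n p) (v p)
          - fderiv ℝ (fun r => q * n r * dot3 (A r) (v r)) p (1, (0:V3))) := i1.sub i2
      rw [integral_sub (i12.integrableOn) (i3.integrableOn),
        integral_sub (i1.integrableOn) (i2.integrableOn)]
    have hΦ : (∫ p in Set.Ioo 0 T ×ˢ Ω,
        (dot3 (EL q η ui ue A n p) (v p)
          - fderiv ℝ (fun r => q * n r * dot3 (A r) (v r)) p (1, (0:V3))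
          - ∑ j, fderiv ℝ (fun r => q * n r * dot3 (A r) (v r) * ue r j) p
              ((0:ℝ), Pi.single j 1))) = 0 := by
      rw [show (fun p => (dot3 (EL q η ui ue A n p) (v p)
          - fderiv ℝ (fun r => q * n r * dot3 (A r) (v r)) p (1, (0:V3))
          - ∑ j, fderiv ℝ (fun r => q * n r * dot3 (A r) (v r) * ue r j) p
              ((0:ℝ), Pi.single j 1)))
        = (fun p => (η * (q * n p) ^ 2 * dot3 (ui p - ue p) (v p)
          - q * n p * dot3 (A p)
              (dt v p + lie3 (fun y => ue (p.1, y)) (fun y => v (p.1, y)) p.2)))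
        from funext fun p => by rw [hid p]; ring]
      exact hvar v hv hvc hvs
    have hT1 : (∫ p in Set.Ioo 0 T ×ˢ Ω,
        fderiv ℝ (fun r => q * n r * dot3 (A r) (v r)) p (1, (0:V3))) = 0 := by
      rw [setIntegral_eq_integral_of_forall_compl_eq_zero (fun p hp => ?_)]
      · exact key_ibp _ sψ cψ _
      · rw [fderiv_of_notMem_tsupport ℝ (fun hmem => hp (tψv hmem))]
        simp
    have hT2 : (∫ p in Set.Ioo 0 T ×ˢ Ω, ∑ j, fderiv ℝ
        (fun r => q * n r * dot3 (A r) (v r) * ue r j) p ((0:ℝ), Pi.single j 1)) = 0 := by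
      rw [setIntegral_eq_integral_of_forall_compl_eq_zero (fun p hp => ?_)]
      · rw [integral_finset_sum _ fun j _ => i3j j]
        exact Finset.sum_eq_zero fun j _ => key_ibp _ (sψj j) (cψj j) _
      · refine Finset.sum_eq_zero fun j _ => ?_
        rw [fderiv_of_notMem_tsupport ℝ (fun hmem => hp (tψjv j hmem))]
        simp
    rw [hsub, hT1, hT2] at hΦ
    linarith [hΦ]
  -- fundamental lemma of the calculus of variations
  intro p hp
  funext i
  show EL q η ui ue A n p i = (0 : V3) i
  simp only [Pi.zero_apply]
  by_contra hne
  set c := EL q η ui ue A n p i with hc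
  have hgopen : IsOpen {r : ℝ × V3 | 0 < EL q η ui ue A n r i * c} :=
    isOpen_lt continuous_const ((hELconti i).mul continuous_const)
  have hpU : p ∈ (Set.Ioo 0 T ×ˢ Ω) ∩ {r : ℝ × V3 | 0 < EL q η ui ue A n r i * c} :=
    ⟨hp, by simpa [← hc] using mul_self_pos.2 hne⟩
  have hU : IsOpen ((Set.Ioo 0 T ×ˢ Ω) ∩ {r : ℝ × V3 | 0 < EL q η ui ue A n r i * c}) :=
    hSopen.inter hgopen
  obtain ⟨φ, hφs, hφc, hφsm, hφr, hφ1⟩ := exists_contDiff_tsupport_subset (n := ⊤) (hU.mem_nhds hpU)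
  have hφnn : ∀ r, 0 ≤ φ r := fun r => (hφr (Set.mem_range_self r)).1
  have hsupφ : ∀ r, φ r ≠ 0 → 0 < EL q η ui ue A n r i * c := by
    intro r hr
    exact (hφs (subset_closure hr)).2
  have hvsm : ContDiff ℝ (⊤ : ℕ∞) (fun r : ℝ × V3 => (c * φ r) • (Pi.single i 1 : V3)) :=
    (contDiff_const.mul hφsm).smul contDiff_const
  have hvsupp : Function.support (fun r : ℝ × V3 => (c * φ r) • (Pi.single i 1 : V3))
      ⊆ Function.support φ := by
    intro r hr
    simp only [Function.mem_support] at hr ⊢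
    intro h0
    exact hr (by simp [h0])
  have hvc : HasCompactSupport (fun r : ℝ × V3 => (c * φ r) • (Pi.single i 1 : V3)) :=
    hφc.mono hvsupp
  have hvts : tsupport (fun r : ℝ × V3 => (c * φ r) • (Pi.single i 1 : V3))
      ⊆ Set.Ioo 0 T ×ˢ Ω :=
    (closure_mono hvsupp).trans (hφs.trans Set.inter_subset_left)
  have h0 := hint _ hvsm hvc hvts
  have hdot : ∀ r, dot3 (EL q η ui ue A n r)
      ((fun r : ℝ × V3 => (c * φ r) • (Pi.single i 1 : V3)) r)
      = φ r * (EL q η ui ue A n r i * c) := by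
    intro r
    simp only [dot3, Pi.smul_apply, smul_eq_mul, Pi.single_apply]
    rw [Finset.sum_congr rfl (fun k _ => by
      rw [show EL q η ui ue A n r k * (c * φ r * if k = i then (1:ℝ) else 0)
        = (if k = i then EL q η ui ue A n r k * (c * φ r) else 0) from by
          split <;> simp])]
    rw [Finset.sum_ite_eq' Finset.univ i (fun k => EL q η ui ue A n r k * (c * φ r))]
    simp
    ring
  rw [show (fun p => dot3 (EL q η ui ue A n p)
      ((fun r : ℝ × V3 => (c * φ r) • (Pi.single i 1 : V3)) p))
    = fun p => φ p * (EL q η ui ue A n p i * c) from funext hdot] at h0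
  -- positivity
  have hnn : ∀ r, 0 ≤ φ r * (EL q η ui ue A n r i * c) := by
    intro r
    rcases eq_or_ne (φ r) 0 with h|h
    · simp [h]
    · exact le_of_lt (mul_pos (lt_of_le_of_ne (hφnn r) (Ne.symm h)) (hsupφ r h))
  have hintg : Integrable (fun r => φ r * (EL q η ui ue A n r i * c)) := by
    refine (hφsm.continuous.mul ((hELconti i).mul continuous_const)).integrable_of_hasCompactSupport
      (hφc.mono ?_)
    intro r hr
    simp only [Function.mem_support] at hr ⊢
    intro h0
    exact hr (by simp [h0])
  have hglob : (∫ r in Set.Ioo 0 T ×ˢ Ω, φ r * (EL q η ui ue A n r i * c))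
      = ∫ r : ℝ × V3, φ r * (EL q η ui ue A n r i * c) := by
    refine setIntegral_eq_integral_of_forall_compl_eq_zero (fun r hr => ?_)
    have : φ r = 0 := by
      by_contra hφr0
      exact hr (Set.inter_subset_left (hφs (subset_closure hφr0)))
    simp [this]
  have hpos : 0 < ∫ r : ℝ × V3, φ r * (EL q η ui ue A n r i * c) := by
    rw [integral_pos_iff_support_of_nonneg hnn hintg]
    have hWopen : IsOpen {r : ℝ × V3 | 0 < φ r * (EL q η ui ue A n r i * c)} :=
      isOpen_lt continuous_const (hφsm.continuous.mul ((hELconti i).mul continuous_const))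
    have hpW : p ∈ {r : ℝ × V3 | 0 < φ r * (EL q η ui ue A n r i * c)} := by
      have := mul_self_pos.2 hne
      simp only [Set.mem_setOf_eq, hφ1, one_mul]
      rw [← hc]
      exact this
    refine lt_of_lt_of_le (hWopen.measure_pos volume ⟨p, hpW⟩) (measure_mono ?_)
    intro r hr
    exact ne_of_gt hr
  rw [hglob] at h0
  exact absurd h0 (ne_of_gt hpos)

/-- resistive Ohm's law in visco-resistive Hall MHD from the
generalized Lagrange–d'Alembert principle. -/
theorem vr_hall_mhd_resistive_ohm
    (Ω : Set V3) (hΩ : IsOpen Ω) (T : ℝ) (hT : 0 < T) (q η : ℝ)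
    (ui ue A : ℝ × V3 → V3) (n : ℝ × V3 → ℝ)
    (hui : ContDiff ℝ (⊤ : ℕ∞) ui) (hue : ContDiff ℝ (⊤ : ℕ∞) ue)
    (hA : ContDiff ℝ (⊤ : ℕ∞) A) (hn : ContDiff ℝ (⊤ : ℕ∞) n)
    (hadv : ∀ p ∈ Set.Ioo 0 T ×ˢ Ω,
      dt n p + div3 (fun y => n (p.1, y) • ui (p.1, y)) p.2 = 0)
    (hdiv : ∀ p ∈ Set.Ioo 0 T ×ˢ Ω,
      div3 (fun y => n (p.1, y) • ui (p.1, y)) p.2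
        = div3 (fun y => n (p.1, y) • ue (p.1, y)) p.2)
    (hvar : ∀ v : ℝ × V3 → V3, ContDiff ℝ (⊤ : ℕ∞) v → HasCompactSupport v →
      tsupport v ⊆ Set.Ioo 0 T ×ˢ Ω →
      (∫ p in Set.Ioo 0 T ×ˢ Ω,
        (η * (q * n p) ^ 2 * dot3 (ui p - ue p) (v p)
          - q * n p * dot3 (A p)
              (dt v p + lie3 (fun y => ue (p.1, y)) (fun y => v (p.1, y)) p.2))) = 0)
    (E B J : ℝ × V3 → V3)
    (hE : ∀ p : ℝ × V3, E p = -dt A p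
      - grad3 (fun y => dot3 (A (p.1, y)) (ue (p.1, y))) p.2)
    (hB : ∀ p : ℝ × V3, B p = curl3 (fun y => A (p.1, y)) p.2)
    (hJ : ∀ p : ℝ × V3, J p = (q * n p) • (ui p - ue p)) :
    ∀ p ∈ Set.Ioo 0 T ×ˢ Ω,
      (q * n p) • (η • J p - E p - crossProduct (ue p) (B p)) = 0
      ∧ (q * n p ≠ 0 → E p + crossProduct (ue p) (B p) = η • J p) := by
  intro p hp
  have hEL0 := var_to_EL Ω hΩ T q η ui ue A n hui hue hA hn hvar p hp
  have key := EL_to_ohm q η ui ue A n hui hue hA hn p hEL0 (hadv p hp) (hdiv p hp)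
  have key2 : (q * n p) • (η • J p - E p - crossProduct (ue p) (B p)) = 0 := by
    rw [hE p, hB p, hJ p]
    exact key
  refine ⟨key2, fun hqn => ?_⟩
  have hz : η • J p - E p - crossProduct (ue p) (B p) = 0 := by
    rcases smul_eq_zero.mp key2 with h|h
    · exact absurd h hqn
    · exact h
  have hz2 : η • J p - (E p + crossProduct (ue p) (B p)) = 0 := by
    rw [← hz]; abel
  exact (sub_eq_zero.mp hz2).symm

end
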